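/- arXiv:1511.09159 — 2 statements merged into one kernel-verified Lean document; each statement's English description precedes it below -/
import Mathlib

section
/- The function f(b, w) = (1/n) Σ_{i=1}^n φ_H(y_i(b + x_iᵀw)) is convex and differentiable on ℝ × ℝ^p, and its gradient ∇f is Lipschitz continuous with constant L_f = (1/(nδ)) Σ_{i=1}^n y_i²(1 + ‖x_i‖²), i.e., ‖∇f(u) − ∇f(û)‖ ≤ L_f ‖u − û‖ for all u = (b, w) and û = (b̂, ŵ) in ℝ × ℝ^p. -/
/-!
Writing `s = 1 - t`, the huberized hinge loss is `(max s 0 ^ 2 - max (s - δ) 0 ^ 2) / (2δ)`, so it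
is differentiable with derivative `-min (max s 0) δ / δ`: a clamp, hence monotone (so `φ_H` is
convex) and `1/δ`-Lipschitz. With `aᵢ = yᵢ (1, xᵢ)` the loss is `u ↦ (1/n) ∑ φ_H ⟪aᵢ, u⟫`, whose
gradient `(1/n) ∑ φ_H'(⟪aᵢ, u⟫) aᵢ` is therefore `(1/(nδ)) ∑ ‖aᵢ‖²`-Lipschitz by Cauchy–Schwarz,
and `‖aᵢ‖² = yᵢ² (1 + ‖xᵢ‖²)`.
-/

open scoped RealInnerProductSpace
open Set

noncomputable def phiH (δ t : ℝ) : ℝ :=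
  if 1 < t then 0 else if 1 - δ < t then (1 - t) ^ 2 / (2 * δ) else 1 - t - δ / 2

theorem hasDerivAt_max_zero_sq (s : ℝ) :
    HasDerivAt (fun r : ℝ => max r 0 ^ 2) (2 * max s 0) s := by
  rcases lt_trichotomy s 0 with hs | rfl | hs
  · rw [max_eq_right hs.le, mul_zero]
    refine (hasDerivAt_const s (0 : ℝ)).congr_of_eventuallyEq ?_
    filter_upwards [Iio_mem_nhds hs] with r (hr : r < 0)
    simp [hr.le]
  · have hneg : HasDerivWithinAt (fun r : ℝ => max r 0 ^ 2) 0 (Iic 0) 0 :=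
      (hasDerivWithinAt_const _ _ (0 : ℝ)).congr (fun r (hr : r ≤ 0) => by simp [hr]) (by simp)
    have hpos : HasDerivWithinAt (fun r : ℝ => max r 0 ^ 2) 0 (Ici 0) 0 :=
      ((hasDerivAt_pow 2 (0 : ℝ)).hasDerivWithinAt.congr (fun r (hr : 0 ≤ r) => by simp [hr])
        (by simp)).congr_deriv (by simp)
    simpa [Iic_union_Ici] using hneg.union hpos
  · rw [max_eq_left hs.le]
    refine (hasDerivAt_pow 2 s).congr_deriv (by simp) |>.congr_of_eventuallyEq ?_
    filter_upwards [Ioi_mem_nhds hs] with r (hr : 0 < r)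
    simp [hr.le]

theorem max_sub_max_sub_eq_min {δ : ℝ} (hδ : 0 ≤ δ) (s : ℝ) :
    max s 0 - max (s - δ) 0 = min (max s 0) δ := by
  grind

theorem phiH_eq_max_sq_sub {δ : ℝ} (hδ : 0 < δ) (t : ℝ) :
    phiH δ t = (max (1 - t) 0 ^ 2 - max (1 - t - δ) 0 ^ 2) / (2 * δ) := by
  unfold phiH
  split_ifs with h1 h2
  · rw [max_eq_right (by linarith), max_eq_right (by linarith)]; ring
  · rw [max_eq_left (by linarith), max_eq_right (by linarith)]; ring
  · rw [max_eq_left (by linarith), max_eq_left (by linarith)]; field_simp; ring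

noncomputable def phiHDeriv (δ t : ℝ) : ℝ := -min (max (1 - t) 0) δ / δ

theorem hasDerivAt_phiH {δ : ℝ} (hδ : 0 < δ) (t : ℝ) :
    HasDerivAt (phiH δ) (phiHDeriv δ t) t := by
  have hsq : ∀ c : ℝ, HasDerivAt (fun r => max (1 - r - c) 0 ^ 2) (-(2 * max (1 - t - c) 0)) t :=
    fun c => by
      simpa [Function.comp_def] using (hasDerivAt_max_zero_sq (1 - t - c)).comp t
        (((hasDerivAt_id t).const_sub 1).sub_const c)
  have h := ((hsq 0).fun_sub (hsq δ)).div_const (2 * δ)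
  simp only [sub_zero] at h
  refine (h.congr_deriv ?_).congr_of_eventuallyEq (.of_forall (phiH_eq_max_sq_sub hδ))
  rw [phiHDeriv, ← max_sub_max_sub_eq_min hδ.le]
  field_simp
  ring

theorem monotone_phiHDeriv {δ : ℝ} (hδ : 0 < δ) : Monotone (phiHDeriv δ) := by
  intro s t hst
  unfold phiHDeriv
  gcongr

theorem abs_phiHDeriv_sub_le {δ : ℝ} (hδ : 0 < δ) (s t : ℝ) :
    |phiHDeriv δ s - phiHDeriv δ t| ≤ δ⁻¹ * |s - t| := by
  have hclamp : |min (max (1 - t) 0) δ - min (max (1 - s) 0) δ| ≤ |s - t| := calc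
    _ ≤ |max (1 - t) 0 - max (1 - s) 0| := by simpa using abs_min_sub_min_le_max _ δ _ δ
    _ ≤ |(1 - t) - (1 - s)| := abs_max_sub_max_le_abs _ _ _
    _ = |s - t| := by ring_nf
  rw [phiHDeriv, phiHDeriv, ← sub_div, abs_div, abs_of_pos hδ, div_eq_inv_mul]
  exact mul_le_mul_of_nonneg_left (by rwa [neg_sub_neg]) (inv_nonneg.2 hδ.le)

theorem convexOn_phiH {δ : ℝ} (hδ : 0 < δ) : ConvexOn ℝ univ (phiH δ) := by
  refine Monotone.convexOn_univ_of_deriv (fun t => (hasDerivAt_phiH hδ t).differentiableAt) ?_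
  rw [funext fun t => (hasDerivAt_phiH hδ t).deriv]
  exact monotone_phiHDeriv hδ

section SumCompInner

variable {ι E : Type*} [NormedAddCommGroup E] [InnerProductSpace ℝ E] (s : Finset ι) (a : ι → E)

theorem ConvexOn.sum_comp_inner {g : ℝ → ℝ} (hg : ConvexOn ℝ univ g) :
    ConvexOn ℝ univ fun u => ∑ i ∈ s, g ⟪a i, u⟫ := by
  classical
  induction s using Finset.induction_on with
  | empty => simpa using convexOn_const (0 : ℝ) convex_univ
  | insert j s hj ih =>
    simp only [Finset.sum_insert hj]
    refine ConvexOn.add ?_ ih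
    simpa [Function.comp_def] using hg.comp_linearMap (innerₗ E (a j))

theorem hasGradientAt_sum_comp_inner [CompleteSpace E] {g g' : ℝ → ℝ}
    (hg : ∀ t, HasDerivAt g (g' t) t) (u : E) :
    HasGradientAt (fun v => ∑ i ∈ s, g ⟪a i, v⟫) (∑ i ∈ s, g' ⟪a i, u⟫ • a i) u := by
  have hterm : ∀ i ∈ s, HasFDerivAt (fun v => g ⟪a i, v⟫) (g' ⟪a i, u⟫ • innerSL ℝ (a i)) u :=
    fun i _ => (hg _).comp_hasFDerivAt u (innerSL ℝ (a i)).hasFDerivAt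
  rw [hasGradientAt_iff_hasFDerivAt, map_sum]
  simp only [map_smul]
  exact HasFDerivAt.fun_sum hterm

theorem HasGradientAt.const_mul [CompleteSpace E] {f : E → ℝ} {f' u : E}
    (hf : HasGradientAt f f' u) (c : ℝ) :
    HasGradientAt (fun v => c * f v) (c • f') u := by
  rw [hasGradientAt_iff_hasFDerivAt, map_smul]
  exact HasFDerivAt.const_mul hf c

theorem norm_sum_smul_sub_sum_smul_le {g' : ℝ → ℝ} {K : ℝ}
    (hg' : ∀ s t, |g' s - g' t| ≤ K * |s - t|) (u v : E) :
    ‖∑ i ∈ s, g' ⟪a i, u⟫ • a i - ∑ i ∈ s, g' ⟪a i, v⟫ • a i‖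
      ≤ K * (∑ i ∈ s, ‖a i‖ ^ 2) * ‖u - v‖ := by
  have hK : 0 ≤ K := by simpa using (abs_nonneg _).trans (hg' 1 0)
  rw [← Finset.sum_sub_distrib, mul_assoc, Finset.sum_mul, Finset.mul_sum]
  refine (norm_sum_le _ _).trans (Finset.sum_le_sum fun i _ => ?_)
  calc ‖g' ⟪a i, u⟫ • a i - g' ⟪a i, v⟫ • a i‖
      = |g' ⟪a i, u⟫ - g' ⟪a i, v⟫| * ‖a i‖ := by rw [← sub_smul, norm_smul, Real.norm_eq_abs]
    _ ≤ K * |⟪a i, u - v⟫| * ‖a i‖ := by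
        rw [inner_sub_right]
        gcongr
        exact hg' _ _
    _ ≤ K * (‖a i‖ * ‖u - v‖) * ‖a i‖ := by
        gcongr
        exact abs_real_inner_le_norm _ _
    _ = K * (‖a i‖ ^ 2 * ‖u - v‖) := by ring

end SumCompInner

noncomputable def augmentedSample {p : ℕ} (y : ℝ) (x : EuclideanSpace ℝ (Fin p)) :
    EuclideanSpace ℝ (Fin (p + 1)) :=
  y • WithLp.toLp 2 (Fin.cons 1 x.ofLp)

theorem inner_augmentedSample {p : ℕ} (y : ℝ) (x : EuclideanSpace ℝ (Fin p))
    (u : EuclideanSpace ℝ (Fin (p + 1))) :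
    ⟪augmentedSample y x, u⟫ = y * (u 0 + ∑ j : Fin p, x j * u j.succ) := by
  simp [augmentedSample, PiLp.inner_apply, Fin.sum_univ_succ, mul_comm, mul_add, Finset.mul_sum,
    mul_assoc]

theorem norm_augmentedSample_sq {p : ℕ} (y : ℝ) (x : EuclideanSpace ℝ (Fin p)) :
    ‖augmentedSample y x‖ ^ 2 = y ^ 2 * (1 + ‖x‖ ^ 2) := by
  simp [augmentedSample, EuclideanSpace.norm_sq_eq, Fin.sum_univ_succ, norm_smul, mul_pow]

theorem bhsvm_loss_convex_diff_lipschitz_grad_general (n p : ℕ)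
    (δ : ℝ) (hδ : 0 < δ)
    (x : Fin n → EuclideanSpace ℝ (Fin p)) (y : Fin n → ℝ)
    (f : EuclideanSpace ℝ (Fin (p + 1)) → ℝ)
    (hf : ∀ u, f u =
      (1 / (n : ℝ)) * ∑ i, phiH δ (y i * (u 0 + ∑ j : Fin p, x i j * u j.succ)))
    (Lf : ℝ) (hLf : Lf = (1 / ((n : ℝ) * δ)) * ∑ i, (y i) ^ 2 * (1 + ‖x i‖ ^ 2)) :
    ConvexOn ℝ Set.univ f ∧
    ∃ gradf : EuclideanSpace ℝ (Fin (p + 1)) → EuclideanSpace ℝ (Fin (p + 1)),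
      (∀ u, HasGradientAt f (gradf u) u) ∧
      ∀ u uhat, ‖gradf u - gradf uhat‖ ≤ Lf * ‖u - uhat‖ := by
  set a : Fin n → EuclideanSpace ℝ (Fin (p + 1)) := fun i => augmentedSample (y i) (x i)
  have hfa : f = fun u => 1 / (n : ℝ) * ∑ i, phiH δ ⟪a i, u⟫ := by
    funext u
    simp only [hf, a, inner_augmentedSample]
  subst hfa
  refine ⟨?_, fun u => (1 / (n : ℝ)) • ∑ i, phiHDeriv δ ⟪a i, u⟫ • a i,
    fun u => (hasGradientAt_sum_comp_inner _ a (hasDerivAt_phiH hδ) u).const_mul _, fun u v => ?_⟩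
  · simpa only [Pi.smul_apply, smul_eq_mul] using
      ((convexOn_phiH hδ).sum_comp_inner Finset.univ a).smul (by positivity : (0 : ℝ) ≤ 1 / n)
  · rw [← smul_sub, norm_smul, Real.norm_of_nonneg (by positivity), hLf]
    calc _ ≤ 1 / (n : ℝ) * (δ⁻¹ * (∑ i, ‖a i‖ ^ 2) * ‖u - v‖) := by
          gcongr
          exact norm_sum_smul_sub_sum_smul_le _ _ (abs_phiHDeriv_sub_le hδ) u v
      _ = _ := by
          simp only [a, norm_augmentedSample_sq]
          ring

/-- the B-HSVM loss `f(b,w) = (1/n) ∑ φ_H(y_i (b + xᵢᵀ w))`,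
viewed as a function of `u = (b; w) ∈ ℝ^{p+1}` (with `b = u 0` and
`w_j = u j.succ`), is convex and differentiable, and its gradient is
Lipschitz continuous with constant `L_f = (1/(nδ)) ∑ yᵢ² (1 + ‖xᵢ‖²)`. -/
theorem bhsvm_loss_convex_diff_lipschitz_grad (n p : ℕ) (hn : 0 < n)
    (δ : ℝ) (hδ : 0 < δ)
    (x : Fin n → EuclideanSpace ℝ (Fin p)) (y : Fin n → ℝ)
    (hy : ∀ i, y i = 1 ∨ y i = -1)
    (f : EuclideanSpace ℝ (Fin (p + 1)) → ℝ)
    (hf : ∀ u, f u =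
      (1 / (n : ℝ)) * ∑ i, phiH δ (y i * (u 0 + ∑ j : Fin p, x i j * u j.succ)))
    (Lf : ℝ) (hLf : Lf = (1 / ((n : ℝ) * δ)) * ∑ i, (y i) ^ 2 * (1 + ‖x i‖ ^ 2)) :
    ConvexOn ℝ Set.univ f ∧
    ∃ gradf : EuclideanSpace ℝ (Fin (p + 1)) → EuclideanSpace ℝ (Fin (p + 1)),
      (∀ u, HasGradientAt f (gradf u) u) ∧
      ∀ u uhat, ‖gradf u - gradf uhat‖ ≤ Lf * ‖u - uhat‖ :=
  bhsvm_loss_convex_diff_lipschitz_grad_general n p δ hδ x y f hf Lf hLf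
end

section
/- Let z ∈ ℝ^J and λ > 0. There exists σ* ∈ [z_min − λ, z_max + λ] (z_min, z_max the smallest and largest entries of z) such that eᵀS_λ(z − σ* e) = 0, and for any such σ*, the vector w* = S_λ(z − σ* e) is the unique minimizer of (1/2)‖w − z‖² + λ‖w‖₁ over {w ∈ ℝ^J : eᵀw = 0}. -/
/-!
For fixed `σ`, completing the square gives
`½(x - z)² + λ|x| + σx = ½(x - (z - σ))² + λ|x| + const`, and the scalar function
`x ↦ ½(x - t)² + λ|x|` is 1-strongly convex with minimizer `S_λ(t)`. Summing over the
coordinates, on the hyperplane `eᵀw = 0` the objective exceeds its value at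
`w* = S_λ(z - σ* e)` by at least `½‖w - w*‖²`, as soon as `eᵀw* = 0`. Such a `σ*` exists
by the intermediate value theorem: `σ ↦ eᵀS_λ(z - σ e)` is continuous, nonnegative at
`z_min - λ` and nonpositive at `z_max + λ`.
-/

/-- The soft-thresholding (shrinkage) operator `S_λ(t) = sign(t) max(|t|-λ, 0)`. -/
noncomputable def soft (lam t : ℝ) : ℝ := Real.sign t * max (|t| - lam) 0

lemma soft_eq_max_sub_max {lam : ℝ} (hlam : 0 ≤ lam) (t : ℝ) :
    soft lam t = max (t - lam) 0 - max (-t - lam) 0 := by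
  unfold soft
  rcases lt_trichotomy t 0 with ht | rfl | ht
  · rw [Real.sign_of_neg ht, abs_of_neg ht, max_eq_right (by linarith : t - lam ≤ 0)]
    ring
  · simp [max_eq_right (neg_nonpos.mpr hlam)]
  · rw [Real.sign_of_pos ht, abs_of_pos ht, max_eq_right (by linarith : -t - lam ≤ 0)]
    ring

lemma continuous_soft {lam : ℝ} (hlam : 0 ≤ lam) : Continuous (soft lam) := by
  rw [funext (soft_eq_max_sub_max hlam)]
  fun_prop

lemma soft_nonneg {lam t : ℝ} (hlam : 0 ≤ lam) (ht : 0 ≤ t) : 0 ≤ soft lam t := by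
  rw [soft_eq_max_sub_max hlam, max_eq_right (by linarith : -t - lam ≤ 0), sub_zero]
  exact le_max_right _ _

lemma soft_nonpos {lam t : ℝ} (hlam : 0 ≤ lam) (ht : t ≤ 0) : soft lam t ≤ 0 := by
  rw [soft_eq_max_sub_max hlam, max_eq_right (by linarith : t - lam ≤ 0), zero_sub,
    neg_nonpos]
  exact le_max_right _ _

lemma soft_of_le {lam t : ℝ} (hlam : 0 ≤ lam) (h : lam ≤ t) : soft lam t = t - lam := by
  rw [soft_eq_max_sub_max hlam, max_eq_left (by linarith), max_eq_right (by linarith)]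
  ring

lemma soft_of_le_neg {lam t : ℝ} (hlam : 0 ≤ lam) (h : t ≤ -lam) : soft lam t = t + lam := by
  rw [soft_eq_max_sub_max hlam, max_eq_right (by linarith), max_eq_left (by linarith)]
  ring

lemma soft_of_abs_le {lam t : ℝ} (h : |t| ≤ lam) : soft lam t = 0 := by
  rw [soft_eq_max_sub_max ((abs_nonneg t).trans h), max_eq_right (by linarith [le_abs_self t]),
    max_eq_right (by linarith [neg_abs_le t])]
  ring

/-- `soft lam t` is the proximal point of `lam|·|` at `t`; the extra `½(x - soft lam t)²`
is the gain from 1-strong convexity. -/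
lemma soft_prox_ineq {lam : ℝ} (hlam : 0 ≤ lam) (t x : ℝ) :
    1 / 2 * (soft lam t - t) ^ 2 + lam * |soft lam t| + 1 / 2 * (x - soft lam t) ^ 2 ≤
      1 / 2 * (x - t) ^ 2 + lam * |x| := by
  rcases le_or_gt lam t with hpos | hlt
  · rw [soft_of_le hlam hpos, abs_of_nonneg (by linarith)]
    nlinarith [le_abs_self x]
  rcases le_or_gt t (-lam) with hneg | hgt
  · rw [soft_of_le_neg hlam hneg, abs_of_nonpos (by linarith)]
    nlinarith [neg_abs_le x]
  · have ht : |t| ≤ lam := abs_le.mpr ⟨hgt.le, hlt.le⟩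
    have hmul : t * x ≤ lam * |x| :=
      (le_abs_self _).trans ((abs_mul t x).trans_le (mul_le_mul_of_nonneg_right ht (abs_nonneg x)))
    rw [soft_of_abs_le ht, abs_zero]
    nlinarith

lemma exists_mem_Icc_sum_soft_sub_eq_zero {ι : Type*} [Fintype ι] {lam : ℝ} (hlam : 0 ≤ lam)
    (z : ι → ℝ) (h : (Finset.univ : Finset ι).Nonempty) :
    ∃ σ ∈ Set.Icc (Finset.univ.inf' h z - lam) (Finset.univ.sup' h z + lam),
      ∑ j, soft lam (z j - σ) = 0 := by
  have hmin : ∀ j, Finset.univ.inf' h z ≤ z j := fun j => Finset.inf'_le _ (Finset.mem_univ j)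
  have hmax : ∀ j, z j ≤ Finset.univ.sup' h z := fun j => Finset.le_sup' _ (Finset.mem_univ j)
  obtain ⟨j₀, -⟩ := id h
  have hcont : Continuous fun σ => ∑ j, soft lam (z j - σ) :=
    continuous_finsetSum _ fun j _ =>
      (continuous_soft hlam).comp (continuous_const.sub continuous_id)
  refine intermediate_value_Icc' (by linarith [hmin j₀, hmax j₀]) hcont.continuousOn
    ⟨Finset.sum_nonpos fun j _ => soft_nonpos hlam ?_,
      Finset.sum_nonneg fun j _ => soft_nonneg hlam ?_⟩
  · linarith [hmax j]
  · linarith [hmin j]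

lemma objective_add_half_norm_sq_le {ι : Type*} [Fintype ι] {lam σ : ℝ} (hlam : 0 ≤ lam)
    {z wstar w : EuclideanSpace ℝ ι} (hwstar : ∀ j, wstar j = soft lam (z j - σ))
    (hwstar_sum : ∑ j, wstar j = 0) (hw : ∑ j, w j = 0) :
    1 / 2 * ‖wstar - z‖ ^ 2 + lam * ∑ j, |wstar j| + 1 / 2 * ‖w - wstar‖ ^ 2 ≤
      1 / 2 * ‖w - z‖ ^ 2 + lam * ∑ j, |w j| := by
  -- `σ * w j` is the Lagrange multiplier term; it sums to zero on both sides.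
  have hcoord : ∀ j, 1 / 2 * (wstar j - z j) ^ 2 + lam * |wstar j| + 1 / 2 * (w j - wstar j) ^ 2
      + σ * wstar j ≤ 1 / 2 * (w j - z j) ^ 2 + lam * |w j| + σ * w j := by
    intro j
    rw [hwstar j]
    nlinarith [soft_prox_ineq hlam (z j - σ) (w j)]
  have hsum := Finset.sum_le_sum fun j (_ : j ∈ Finset.univ) => hcoord j
  simp only [Finset.sum_add_distrib, ← Finset.mul_sum, hw, hwstar_sum] at hsum
  simp only [EuclideanSpace.real_norm_sq_eq, PiLp.sub_apply, Finset.mul_sum]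
  simpa only [mul_zero, add_zero, Finset.mul_sum] using hsum

/-- the ℓ₁-regularized projection subproblem with a zero-sum
constraint.  There is `σ* ∈ [z_min - λ, z_max + λ]` with `eᵀ S_λ(z - σ* e) = 0`,
and for any such `σ*` the vector `w* = S_λ(z - σ* e)` is the unique minimizer
of `(1/2)‖w - z‖² + λ‖w‖₁` over `{w : eᵀ w = 0}`. -/
theorem shrinkage_dual_solution (J : ℕ) (hJ : 0 < J)
    (z : EuclideanSpace ℝ (Fin J)) (lam : ℝ) (hlam : 0 < lam) :
    (∃ σ ∈ Set.Icc
        (Finset.univ.inf' ⟨⟨0, hJ⟩, Finset.mem_univ _⟩ (fun j => z j) - lam)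
        (Finset.univ.sup' ⟨⟨0, hJ⟩, Finset.mem_univ _⟩ (fun j => z j) + lam),
      ∑ j : Fin J, soft lam (z j - σ) = 0) ∧
    ∀ σ : ℝ, (∑ j : Fin J, soft lam (z j - σ) = 0) →
      ∀ wstar : EuclideanSpace ℝ (Fin J), (∀ j, wstar j = soft lam (z j - σ)) →
        (∑ j, wstar j = 0) ∧
        ∀ w : EuclideanSpace ℝ (Fin J), (∑ j, w j = 0) → w ≠ wstar →
          1 / 2 * ‖wstar - z‖ ^ 2 + lam * ∑ j, |wstar j| <
          1 / 2 * ‖w - z‖ ^ 2 + lam * ∑ j, |w j| := by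
  refine ⟨exists_mem_Icc_sum_soft_sub_eq_zero hlam.le _ _, fun σ hσ wstar hwstar => ?_⟩
  have hwstar_sum : ∑ j, wstar j = 0 := by simpa only [hwstar] using hσ
  refine ⟨hwstar_sum, fun w hw hne => ?_⟩
  have hgap : 0 < ‖w - wstar‖ := norm_pos_iff.mpr (sub_ne_zero.mpr hne)
  have hle := objective_add_half_norm_sq_le hlam.le hwstar hwstar_sum hw
  nlinarith
end
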